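/- arXiv:2403.02207 — 2 statements merged into one kernel-verified Lean document; each statement's English description precedes it below -/
import Mathlib

section
/- Let H be a separable complex Hilbert space, C a conjugation on H, and T a bounded linear operator on H that is both C-normal and normal (T*T = TT*). Then C maps (ker T)ᗮ into itself, the restriction C₂ of C to (ker T)ᗮ is a conjugation on (ker T)ᗮ, and the restriction of T to (ker T)ᗮ (well-defined since ker T reduces T) is C₂-normal. -/
open scoped InnerProductSpace
open ContinuousLinearMap TopologicalSpace

/-- A conjugation on a complex Hilbert space: an anti-linear, involutive map
satisfying `⟪C x, C y⟫ = ⟪y, x⟫`. -/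
def Conjugation {K : Type*} [NormedAddCommGroup K] [InnerProductSpace ℂ K] (C : K → K) : Prop :=
  (∀ (a : ℂ) (x y : K), C (a • x + y) = (starRingEnd ℂ) a • C x + C y) ∧
  (∀ x, C (C x) = x) ∧
  (∀ x y : K, ⟪C x, C y⟫_ℂ = ⟪y, x⟫_ℂ)

/-- `T` is `C`-normal: `C T*T C = T T*` (pointwise). -/
def CNormal {K : Type*} [NormedAddCommGroup K] [InnerProductSpace ℂ K] [CompleteSpace K]
    (C : K → K) (T : K →L[ℂ] K) : Prop :=
  ∀ x, C (adjoint T (T (C x))) = T (adjoint T x)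

/-!
For normal `T` one has `ker T = ker T*`, so `C`-normality (`C T*T C = T T*`) shows that `C` maps
`ker T` into `ker T*T = ker T`; since `⟪C x, y⟫ = ⟪C y, x⟫`, `C` then also preserves `(ker T)ᗮ`.
As `T*` takes values in `(ker T)ᗮ`, the closure of its range, the adjoint of the restriction of `T`
is the restriction of `T*`, and the `C`-normality identity restricts pointwise.
-/

namespace Conjugation

variable {K : Type*} [NormedAddCommGroup K] [InnerProductSpace ℂ K] {C : K → K}

theorem map_zero (hC : Conjugation C) : C 0 = 0 := by
  simpa using hC.1 1 0 0

theorem inner_apply_swap (hC : Conjugation C) (x y : K) : ⟪C x, y⟫_ℂ = ⟪C y, x⟫_ℂ := by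
  simpa only [hC.2.1] using hC.2.2 x (C y)

theorem mapsTo_orthogonal (hC : Conjugation C) {U : Submodule ℂ K} (hU : Set.MapsTo C U U) :
    Set.MapsTo C Uᗮ Uᗮ := by
  intro x hx u hu
  rw [← inner_conj_symm, hC.inner_apply_swap, hx _ (hU hu), _root_.map_zero]

theorem restrict (hC : Conjugation C) {U : Submodule ℂ K} {C₂ : U → U}
    (hC₂ : ∀ x, (C₂ x : K) = C x) : Conjugation C₂ := by
  refine ⟨fun a x y ↦ ?_, fun x ↦ ?_, fun x y ↦ ?_⟩
  · ext
    simp only [hC₂, Submodule.coe_add, Submodule.coe_smul, hC.1]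
  · ext
    rw [hC₂, hC₂, hC.2.1]
  · simp only [Submodule.coe_inner, hC₂, hC.2.2]

end Conjugation

theorem ContinuousLinearMap.adjoint_apply_mem_orthogonal_ker {𝕜 E F : Type*} [RCLike 𝕜]
    [NormedAddCommGroup E] [InnerProductSpace 𝕜 E] [CompleteSpace E]
    [NormedAddCommGroup F] [InnerProductSpace 𝕜 F] [CompleteSpace F]
    (T : E →L[𝕜] F) (y : F) : adjoint T y ∈ (LinearMap.ker (T : E →ₗ[𝕜] F))ᗮ :=
  T.orthogonal_ker ▸ Submodule.le_topologicalClosure _ ⟨y, rfl⟩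

theorem ContinuousLinearMap.coe_adjoint_apply_of_coe_apply {𝕜 E : Type*} [RCLike 𝕜]
    [NormedAddCommGroup E] [InnerProductSpace 𝕜 E] [CompleteSpace E]
    {U : Submodule 𝕜 E} [CompleteSpace U] {T : E →L[𝕜] E} {T' : U →L[𝕜] U}
    (hT' : ∀ x, (T' x : E) = T x) (hU : Set.MapsTo (adjoint T) U U) (y : U) :
    (adjoint T' y : E) = adjoint T y := by
  suffices adjoint T' y = ⟨adjoint T y, hU y.2⟩ by rw [this]
  refine ext_inner_left 𝕜 fun v ↦ ?_
  rw [adjoint_inner_right, Submodule.coe_inner, Submodule.coe_inner, hT', adjoint_inner_right]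

section CNormal

variable {K : Type*} [NormedAddCommGroup K] [InnerProductSpace ℂ K] [CompleteSpace K]
  {C : K → K} {T : K →L[ℂ] K}

theorem CNormal.mapsTo_ker (hC : Conjugation C) (hT : CNormal C T) [IsStarNormal T] :
    Set.MapsTo C (LinearMap.ker (T : K →ₗ[ℂ] K)) (LinearMap.ker (T : K →ₗ[ℂ] K)) := by
  intro v (hv : T v = 0)
  have hadj : adjoint T v = 0 := (IsStarNormal.adjoint_apply_eq_zero_iff ‹_› v).mpr hv
  have hCv : adjoint T (T (C v)) = 0 := by
    rw [← hC.2.1 (adjoint T (T (C v))), hT, hadj, _root_.map_zero, hC.map_zero]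
  rw [← T.ker_adjoint_comp_self]
  exact hCv

theorem CNormal.restrict {U : Submodule ℂ K} [CompleteSpace U] (hT : CNormal C T)
    (hU : Set.MapsTo (adjoint T) U U) {C₂ : U → U} (hC₂ : ∀ x, (C₂ x : K) = C x)
    {T' : U →L[ℂ] U} (hT' : ∀ x, (T' x : K) = T x) : CNormal C₂ T' := by
  intro x
  ext
  rw [hC₂, coe_adjoint_apply_of_coe_apply hT' hU, hT', hC₂, hT',
    coe_adjoint_apply_of_coe_apply hT' hU, hT]

end CNormal

theorem stmt_7_general {H : Type*} [NormedAddCommGroup H] [InnerProductSpace ℂ H] [CompleteSpace H]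
    (C : H → H) (hC : Conjugation C)
    (T : H →L[ℂ] H) (hT : CNormal C T)
    (hnormal : adjoint T * T = T * adjoint T) :
    (∀ x ∈ (LinearMap.ker (T : H →ₗ[ℂ] H))ᗮ, C x ∈ (LinearMap.ker (T : H →ₗ[ℂ] H))ᗮ) ∧
    ∀ C₂ : ↥(LinearMap.ker (T : H →ₗ[ℂ] H))ᗮ → ↥(LinearMap.ker (T : H →ₗ[ℂ] H))ᗮ,
      (∀ x : ↥(LinearMap.ker (T : H →ₗ[ℂ] H))ᗮ, (C₂ x : H) = C x) →
      (Conjugation C₂ ∧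
        ∀ T' : ↥(LinearMap.ker (T : H →ₗ[ℂ] H))ᗮ →L[ℂ] ↥(LinearMap.ker (T : H →ₗ[ℂ] H))ᗮ,
          (∀ x : ↥(LinearMap.ker (T : H →ₗ[ℂ] H))ᗮ, (T' x : H) = T x) → CNormal C₂ T') := by
  have : IsStarNormal T := ⟨hnormal⟩
  refine ⟨hC.mapsTo_orthogonal (hT.mapsTo_ker hC), fun C₂ hC₂ ↦ ⟨hC.restrict hC₂, fun T' hT' ↦ ?_⟩⟩
  exact hT.restrict (fun y _ ↦ T.adjoint_apply_mem_orthogonal_ker y) hC₂ hT'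

/-- If `T` is `C`-normal and normal, then `C` maps `(ker T)ᗮ` into itself, the restriction
`C₂` of `C` to `(ker T)ᗮ` is a conjugation, and the restriction of `T` to `(ker T)ᗮ`
is `C₂`-normal. -/
theorem stmt_7 {H : Type*} [NormedAddCommGroup H] [InnerProductSpace ℂ H] [CompleteSpace H]
    [SeparableSpace H]
    (C : H → H) (hC : Conjugation C)
    (T : H →L[ℂ] H) (hT : CNormal C T)
    (hnormal : adjoint T * T = T * adjoint T) :
    (∀ x ∈ (LinearMap.ker (T : H →ₗ[ℂ] H))ᗮ, C x ∈ (LinearMap.ker (T : H →ₗ[ℂ] H))ᗮ) ∧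
    ∀ C₂ : ↥(LinearMap.ker (T : H →ₗ[ℂ] H))ᗮ → ↥(LinearMap.ker (T : H →ₗ[ℂ] H))ᗮ,
      (∀ x : ↥(LinearMap.ker (T : H →ₗ[ℂ] H))ᗮ, (C₂ x : H) = C x) →
      (Conjugation C₂ ∧
        ∀ T' : ↥(LinearMap.ker (T : H →ₗ[ℂ] H))ᗮ →L[ℂ] ↥(LinearMap.ker (T : H →ₗ[ℂ] H))ᗮ,
          (∀ x : ↥(LinearMap.ker (T : H →ₗ[ℂ] H))ᗮ, (T' x : H) = T x) → CNormal C₂ T') :=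
  stmt_7_general C hC T hT hnormal
end

section
/- Let H be a separable complex Hilbert space, C a conjugation on H, and let T = A + iB be C-normal, where A is C-symmetric (A* = CAC) and B is C-skew-symmetric (CB*C = −B). Then T*T = A*A + B*B, TT* = AA* + BB*, the positive operators A*A and B*B commute: (A*A)(B*B) = (B*B)(A*A), and max(‖A‖², ‖B‖²) ≤ ‖T‖² ≤ ‖A‖² + ‖B‖². -/
/-!
Conjugation by `C`, `S ↦ C S C`, is a multiplicative involution on operators that conjugates
scalars. Applied to `T*T` it turns `C`-normality of `T = A + iB` into
`(A - iB)(A* + iB*) = (A + iB)(A* - iB*)`, i.e. `AB* = BA*`; conjugating that identity by `C` once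
more gives `A*B = B*A`. These two identities cancel the cross terms of `T*T` and `TT*` and make
`A*A` and `B*B` commute. The norm bounds follow from `T*T = A*A + B*B` by the C⋆-identity and
the monotonicity of the norm on positive operators.
-/

open scoped InnerProductSpace
open ContinuousLinearMap TopologicalSpace

open ComplexConjugate

section StarAlgebra

variable {R : Type*} [Ring R] [StarRing R] [Algebra ℂ R] [StarModule ℂ R] {a b : R}

lemma star_add_I_smul_mul_self (h : star a * b = star b * a) :
    star (a + Complex.I • b) * (a + Complex.I • b) = star a * a + star b * b := by
  simp only [star_add, star_smul, Complex.star_def, Complex.conj_I, add_mul, mul_add,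
    smul_mul_assoc, mul_smul_comm, h]
  match_scalars <;> simp

lemma add_I_smul_mul_star_self (h : a * star b = b * star a) :
    (a + Complex.I • b) * star (a + Complex.I • b) = a * star a + b * star b := by
  simp only [star_add, star_smul, Complex.star_def, Complex.conj_I, add_mul, mul_add,
    smul_mul_assoc, mul_smul_comm, h]
  match_scalars <;> simp

end StarAlgebra

lemma commute_mul_mul_of_mul_eq_mul {M : Type*} [Semigroup M] {a a' b b' : M}
    (h : a * b' = b * a') (h' : a' * b = b' * a) : Commute (a' * a) (b' * b) :=
  calc a' * a * (b' * b) = a' * (b * a') * b := by rw [← h]; simp only [mul_assoc]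
    _ = b' * a * (a' * b) := by rw [← h']; simp only [mul_assoc]
    _ = b' * (a * b') * a := by rw [h']; simp only [mul_assoc]
    _ = b' * b * (a' * a) := by rw [h]; simp only [mul_assoc]

lemma norm_sq_le_add_of_star_mul_self_eq_add {R : Type*} [NonUnitalNormedRing R] [StarRing R]
    [CStarRing R] {s p q : R} (h : star s * s = star p * p + star q * q) :
    ‖s‖ ^ 2 ≤ ‖p‖ ^ 2 + ‖q‖ ^ 2 := by
  simpa only [sq, ← CStarRing.norm_star_mul_self, h] using norm_add_le _ _

lemma norm_sq_le_of_star_mul_self_eq_add {R : Type*} [NonUnitalCStarAlgebra R] [PartialOrder R]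
    [StarOrderedRing R] {s p q : R} (h : star s * s = star p * p + star q * q) :
    ‖p‖ ^ 2 ≤ ‖s‖ ^ 2 := by
  rw [sq, sq, ← CStarRing.norm_star_mul_self, ← CStarRing.norm_star_mul_self, h]
  exact CStarAlgebra.norm_le_norm_of_nonneg_of_le (star_mul_self_nonneg p)
    (le_add_of_nonneg_right (star_mul_self_nonneg q))

namespace Conjugation

variable {K : Type*} [NormedAddCommGroup K] [InnerProductSpace ℂ K] {C : K → K}

lemma map_add (hC : Conjugation C) (x y : K) : C (x + y) = C x + C y := by
  simpa using hC.1 1 x y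

lemma map_smul (hC : Conjugation C) (a : ℂ) (x : K) : C (a • x) = conj a • C x := by
  have h0 : C 0 = 0 := by simpa using hC.1 1 0 0
  simpa [h0] using hC.1 a x 0

lemma norm_map (hC : Conjugation C) (x : K) : ‖C x‖ = ‖x‖ := by
  rw [@norm_eq_sqrt_re_inner ℂ, @norm_eq_sqrt_re_inner ℂ, hC.2.2]

noncomputable def conjOp (hC : Conjugation C) (S : K →L[ℂ] K) : K →L[ℂ] K :=
  LinearMap.mkContinuous
    { toFun x := C (S (C x))
      map_add' x y := by simp only [S.map_add, hC.map_add]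
      map_smul' a x := by simp [hC.map_smul] }
    ‖S‖ fun x => by
      simpa only [LinearMap.coe_mk, AddHom.coe_mk, hC.norm_map] using S.le_opNorm (C x)

variable (hC : Conjugation C) (S R : K →L[ℂ] K)

@[simp] lemma conjOp_apply (x : K) : hC.conjOp S x = C (S (C x)) := rfl

lemma conjOp_involutive : Function.Involutive hC.conjOp := fun S => by
  ext x; simp [hC.2.1]

lemma conjOp_mul : hC.conjOp (S * R) = hC.conjOp S * hC.conjOp R := by
  ext x; simp [hC.2.1]

lemma conjOp_add : hC.conjOp (S + R) = hC.conjOp S + hC.conjOp R := by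
  ext x; simp [hC.map_add]

lemma conjOp_smul (a : ℂ) : hC.conjOp (a • S) = conj a • hC.conjOp S := by
  ext x; simp [hC.map_smul]

lemma conjOp_neg : hC.conjOp (-S) = -hC.conjOp S := by
  simpa using hC.conjOp_smul S (-1)

variable [CompleteSpace K] {hC} {A B : K →L[ℂ] K}

lemma cNormal_iff : CNormal C S ↔ hC.conjOp (adjoint S * S) = S * adjoint S :=
  ⟨fun h => ext h, fun h x => congrArg (· x) h⟩

lemma conjOp_eq_neg_adjoint (hB : hC.conjOp (adjoint B) = -B) : hC.conjOp B = -adjoint B :=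
  hC.conjOp_involutive.eq_iff.2 (by rw [hC.conjOp_neg, hB, neg_neg])

lemma mul_adjoint_eq_of_cNormal (hA : adjoint A = hC.conjOp A)
    (hB : hC.conjOp (adjoint B) = -B) (hT : CNormal C (A + Complex.I • B)) :
    A * adjoint B = B * adjoint A := by
  have hA' : hC.conjOp (adjoint A) = A := hC.conjOp_involutive.eq_iff.2 hA
  rw [hC.cNormal_iff, hC.conjOp_mul, LinearIsometryEquiv.map_add,
    LinearIsometryEquiv.map_smulₛₗ, hC.conjOp_add, hC.conjOp_add, hC.conjOp_smul,
    hC.conjOp_smul, hA', hB, conjOp_eq_neg_adjoint hB, ← hA] at hT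
  simp only [Complex.conj_I, map_neg, add_mul, mul_add, smul_mul_assoc, mul_smul_comm,
    neg_mul, mul_neg, smul_neg, neg_smul, neg_neg] at hT
  have h : (2 * Complex.I) • (A * adjoint B - B * adjoint A) = 0 := by
    linear_combination (norm := module) hT
  exact sub_eq_zero.1 ((smul_eq_zero.1 h).resolve_left (by simp))

lemma adjoint_mul_eq_of_mul_adjoint_eq (hA : adjoint A = hC.conjOp A)
    (hB : hC.conjOp (adjoint B) = -B) (h : A * adjoint B = B * adjoint A) :
    adjoint A * B = adjoint B * A := by
  have hA' : hC.conjOp (adjoint A) = A := hC.conjOp_involutive.eq_iff.2 hA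
  simpa only [hC.conjOp_mul, ← hA, hB, hA', conjOp_eq_neg_adjoint hB, mul_neg, neg_mul,
    neg_inj] using congrArg hC.conjOp h

end Conjugation

theorem stmt_13_general {H : Type*} [NormedAddCommGroup H] [InnerProductSpace ℂ H] [CompleteSpace H]
    (C : H → H) (hC : Conjugation C)
    (A B : H →L[ℂ] H)
    (hA : ∀ x, adjoint A x = C (A (C x)))
    (hB : ∀ x, C (adjoint B (C x)) = -(B x))
    (hT : CNormal C (A + Complex.I • B)) :
    adjoint (A + Complex.I • B) * (A + Complex.I • B) = adjoint A * A + adjoint B * B ∧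
    (A + Complex.I • B) * adjoint (A + Complex.I • B) = A * adjoint A + B * adjoint B ∧
    (adjoint A * A) * (adjoint B * B) = (adjoint B * B) * (adjoint A * A) ∧
    max (‖A‖ ^ 2) (‖B‖ ^ 2) ≤ ‖A + Complex.I • B‖ ^ 2 ∧
    ‖A + Complex.I • B‖ ^ 2 ≤ ‖A‖ ^ 2 + ‖B‖ ^ 2 := by
  have hA : adjoint A = hC.conjOp A := ext hA
  have hB : hC.conjOp (adjoint B) = -B := ext hB
  have hAB := Conjugation.mul_adjoint_eq_of_cNormal hA hB hT
  have hAB' := Conjugation.adjoint_mul_eq_of_mul_adjoint_eq hA hB hAB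
  simp only [← star_eq_adjoint] at hAB hAB' ⊢
  have hTT := star_add_I_smul_mul_self hAB'
  exact ⟨hTT, add_I_smul_mul_star_self hAB, (commute_mul_mul_of_mul_eq_mul hAB hAB').eq,
    max_le (norm_sq_le_of_star_mul_self_eq_add hTT)
      (norm_sq_le_of_star_mul_self_eq_add (hTT.trans (add_comm _ _))),
    norm_sq_le_add_of_star_mul_self_eq_add hTT⟩

/-- For a `C`-normal operator `T = A + iB` (`A` `C`-symmetric, `B` `C`-skew-symmetric):
`T*T = A*A + B*B`, `TT* = AA* + BB*`, the positive operators `A*A` and `B*B` commute,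
and `max(‖A‖², ‖B‖²) ≤ ‖T‖² ≤ ‖A‖² + ‖B‖²`. -/
theorem stmt_13 {H : Type*} [NormedAddCommGroup H] [InnerProductSpace ℂ H] [CompleteSpace H]
    [SeparableSpace H]
    (C : H → H) (hC : Conjugation C)
    (A B : H →L[ℂ] H)
    (hA : ∀ x, adjoint A x = C (A (C x)))
    (hB : ∀ x, C (adjoint B (C x)) = -(B x))
    (hT : CNormal C (A + Complex.I • B)) :
    adjoint (A + Complex.I • B) * (A + Complex.I • B) = adjoint A * A + adjoint B * B ∧
    (A + Complex.I • B) * adjoint (A + Complex.I • B) = A * adjoint A + B * adjoint B ∧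
    (adjoint A * A) * (adjoint B * B) = (adjoint B * B) * (adjoint A * A) ∧
    max (‖A‖ ^ 2) (‖B‖ ^ 2) ≤ ‖A + Complex.I • B‖ ^ 2 ∧
    ‖A + Complex.I • B‖ ^ 2 ≤ ‖A‖ ^ 2 + ‖B‖ ^ 2 :=
  stmt_13_general C hC A B hA hB hT
end
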